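/- arXiv:0802.0189 — 5 statements merged into one kernel-verified Lean document; each statement's English description precedes it below -/
import Mathlib

section
/- The Catalan numbers satisfy the formula c_n = (4^{n-1}/π) ∫_{-π}^{π} (2 - 2cos θ) ((1 + cos θ)/2)^n dθ for all n ≥ 0. -/
open Real intervalIntegral

lemma wallis_centralBinom (n : ℕ) :
    (4 : ℝ) ^ n * ∏ i ∈ Finset.range n, (2 * (i : ℝ) + 1) / (2 * i + 2) =
      Nat.centralBinom n := by
  induction n with
  | zero => simp [Nat.centralBinom]
  | succ k ih =>
    have h := Nat.succ_mul_centralBinom_succ k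
    have h' : ((k:ℝ) + 1) * Nat.centralBinom (k+1) = 2 * (2*k+1) * Nat.centralBinom k := by
      exact_mod_cast h
    have hk : (2*(k:ℝ)+2) ≠ 0 := by positivity
    rw [Finset.prod_range_succ]
    calc (4:ℝ) ^ (k+1) * ((∏ i ∈ Finset.range k, (2 * (i:ℝ) + 1) / (2 * i + 2)) * ((2*k+1)/(2*k+2)))
        = ((4:ℝ)^k * ∏ i ∈ Finset.range k, (2 * (i:ℝ) + 1) / (2 * i + 2)) * (4*(2*k+1)/(2*k+2)) := by
          rw [pow_succ]; ring
      _ = (Nat.centralBinom k : ℝ) * (4*(2*k+1)/(2*k+2)) := by rw [ih]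
      _ = (Nat.centralBinom (k+1) : ℝ) := by
          field_simp
          nlinarith [h']

lemma cos_pow_integral (m : ℕ) :
    (∫ x in (-(π/2))..(π/2), Real.cos x ^ m) = ∫ x in (0:ℝ)..π, Real.sin x ^ m := by
  have := intervalIntegral.integral_comp_sub_right (a := (0:ℝ)) (b := π)
    (fun x => Real.cos x ^ m) (π/2)
  rw [show (0:ℝ) - π/2 = -(π/2) by ring, show π - π/2 = π/2 by ring] at this
  rw [← this]
  apply intervalIntegral.integral_congr
  intro x _
  simp only
  rw [show x - π/2 = -(π/2 - x) by ring, Real.cos_neg, Real.cos_pi_div_two_sub]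


/-- The Catalan numbers satisfy
`c_n = (4^(n-1)/π) ∫_{-π}^{π} (2 - 2 cos θ) ((1 + cos θ)/2)^n dθ` for all `n ≥ 0`. -/
theorem catalan_integral_formula (n : ℕ) :
    (catalan n : ℝ) =
      (4 : ℝ) ^ ((n : ℤ) - 1) / π *
        ∫ θ in (-π)..π, (2 - 2 * Real.cos θ) * ((1 + Real.cos θ) / 2) ^ n := by
  have hW : ∀ m : ℕ, (∫ x in (-(π/2))..(π/2), Real.cos x ^ (2*m)) =
      π * ∏ i ∈ Finset.range m, (2 * (i : ℝ) + 1) / (2 * i + 2) := fun m => by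
    rw [cos_pow_integral, integral_sin_pow_even]
  -- substitution θ = 2x
  have h2 := intervalIntegral.integral_comp_mul_left (a := -(π/2)) (b := π/2)
    (fun θ => (2 - 2 * Real.cos θ) * ((1 + Real.cos θ) / 2) ^ n) (two_ne_zero)
  rw [show (2:ℝ) * -(π/2) = -π by ring, show (2:ℝ) * (π/2) = π by ring] at h2
  have hmain : (∫ θ in (-π)..π, (2 - 2 * Real.cos θ) * ((1 + Real.cos θ) / 2) ^ n)
      = 2 * ∫ x in (-(π/2))..(π/2), (4 * Real.cos x ^ (2*n) - 4 * Real.cos x ^ (2*(n+1))) := by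
    have hpt : ∀ x : ℝ, (2 - 2 * Real.cos (2*x)) * ((1 + Real.cos (2*x)) / 2) ^ n
        = 4 * Real.cos x ^ (2*n) - 4 * Real.cos x ^ (2*(n+1)) := by
      intro x
      rw [Real.cos_two_mul, pow_mul, pow_mul]
      have : (1 + (2 * Real.cos x ^ 2 - 1)) / 2 = Real.cos x ^ 2 := by ring
      rw [this]
      ring
    have h3 : (∫ θ in (-π)..π, (2 - 2 * Real.cos θ) * ((1 + Real.cos θ) / 2) ^ n)
        = 2 * ∫ x in (-(π/2))..(π/2),
            (fun θ => (2 - 2 * Real.cos θ) * ((1 + Real.cos θ) / 2) ^ n) (2*x) := by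
      rw [h2, smul_eq_mul]; ring
    rw [h3]
    congr 1
    apply intervalIntegral.integral_congr
    intro x _
    exact hpt x
  rw [hmain]
  have hsub : (∫ x in (-(π/2))..(π/2), (4 * Real.cos x ^ (2*n) - 4 * Real.cos x ^ (2*(n+1))))
      = 4 * (∫ x in (-(π/2))..(π/2), Real.cos x ^ (2*n))
        - 4 * ∫ x in (-(π/2))..(π/2), Real.cos x ^ (2*(n+1)) := by
    rw [intervalIntegral.integral_sub, intervalIntegral.integral_const_mul,
      intervalIntegral.integral_const_mul] <;>
      exact (Continuous.intervalIntegrable (by fun_prop) _ _)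
  rw [hsub, hW, hW]
  set W : ℝ := ∏ i ∈ Finset.range n, (2 * (i : ℝ) + 1) / (2 * i + 2) with hWdef
  rw [Finset.prod_range_succ, ← hWdef]
  have hcat : (catalan n : ℝ) = (Nat.centralBinom n : ℝ) / (n + 1) := by
    rw [catalan_eq_centralBinom_div]
    rw [Nat.cast_div (Nat.succ_dvd_centralBinom n) (by exact_mod_cast Nat.succ_ne_zero n)]
    norm_num
  have hcb : (Nat.centralBinom n : ℝ) = 4 ^ n * W := (wallis_centralBinom n).symm
  have hzpow : (4:ℝ) ^ ((n:ℤ) - 1) = 4 ^ n / 4 := by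
    rw [zpow_sub₀ (by norm_num : (4:ℝ) ≠ 0), zpow_natCast, zpow_one]
  rw [hcat, hcb, hzpow]
  have hπ : (π:ℝ) ≠ 0 := Real.pi_ne_zero
  have hn1 : ((n:ℝ) + 1) ≠ 0 := by positivity
  have hn2 : (2*(n:ℝ) + 2) ≠ 0 := by positivity
  field_simp
  ring
end

section
/- Let a > 0 and let f_a(θ) = (2 - 2cos(2√a θ))/(4a) and g_a(θ) = (1 + cos(2√a θ))/2. For any ε with 0 < ε < π/√a, the sequence r_n = ∫_{-ε}^{ε} f_a(θ) g_a(θ)^n dθ satisfies r_n · n^{3/2} → √π/(2 a^{3/2}) as n → ∞. -/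
open Real Filter intervalIntegral Topology Finset

/-!
Substituting `u = √a θ` gives `r n = a^(-3/2) ∫_{-δ}^{δ} sin² u cos^(2n) u du` with
`δ = √a ε ∈ (0, π)`. Over `[-π/2, π/2]` this integral is `π P n / (2n + 2)`, where
`P n = ∏_{i<n} (2i+1)/(2i+2)`, and Wallis' product gives `P n ² (2n + 1) → 2/π`, i.e.
`P n √n → 1/√π`. Between `π/2` and `δ` the integrand is at most `(cos² δ)^n` with `cos² δ < 1`,
so moving the endpoints to `±π/2` costs only an exponentially small error.
-/

noncomputable def wallisProd (n : ℕ) : ℝ := ∏ i ∈ range n, (2 * (i : ℝ) + 1) / (2 * i + 2)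

lemma wallisProd_nonneg (n : ℕ) : 0 ≤ wallisProd n := prod_nonneg fun i _ => by positivity

lemma wallisProd_sq_mul_W (n : ℕ) : wallisProd n ^ 2 * (2 * n + 1) * Wallis.W n = 1 := by
  induction n with
  | zero => simp [wallisProd, Wallis.W]
  | succ n ih =>
    rw [wallisProd, prod_range_succ, ← wallisProd, Wallis.W_succ]
    push_cast
    field_simp
    linear_combination (2 * (n : ℝ) + 3) * ih

lemma tendsto_wallisProd_mul_sqrt :
    Tendsto (fun n : ℕ => wallisProd n * √n) atTop (𝓝 (√π)⁻¹) := by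
  have hsq : Tendsto (fun n : ℕ => wallisProd n ^ 2 * n) atTop (𝓝 π⁻¹) := by
    have hlim := ((Wallis.tendsto_W_nhds_pi_div_two.inv₀ (by positivity)).mul
      (tendsto_natCast_div_add_atTop (1 / 2 : ℝ))).div_const 2
    rw [show (π / 2)⁻¹ * 1 / 2 = π⁻¹ by field_simp] at hlim
    refine hlim.congr fun n => ?_
    have := Wallis.W_pos n
    field_simp
    linear_combination (-n : ℝ) * wallisProd_sq_mul_W n
  have := hsq.sqrt
  rw [sqrt_inv] at this
  refine this.congr fun n => ?_
  rw [sqrt_mul' _ n.cast_nonneg, sqrt_sq (wallisProd_nonneg n)]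

noncomputable def sinSqCosPowIntegral (δ : ℝ) (n : ℕ) : ℝ :=
  ∫ u in (-δ)..δ, sin u ^ 2 * cos u ^ (2 * n)

lemma sinSqCosPowIntegral_pi_div_two (n : ℕ) :
    sinSqCosPowIntegral (π / 2) n = π * wallisProd n / (2 * n + 2) := by
  have hshift : sinSqCosPowIntegral (π / 2) n =
      ∫ x in 0..π, sin x ^ (2 * n) - sin x ^ (2 * (n + 1)) := by
    calc sinSqCosPowIntegral (π / 2) n
        = ∫ x in 0..π, sin (x - π / 2) ^ 2 * cos (x - π / 2) ^ (2 * n) := by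
          rw [integral_comp_sub_right (fun u => sin u ^ 2 * cos u ^ (2 * n)), sub_half, zero_sub,
            sinSqCosPowIntegral]
      _ = _ := integral_congr fun x _ => by
          rw [sin_sub_pi_div_two, cos_sub_pi_div_two, neg_sq, cos_sq']
          ring
  rw [hshift, integral_sub ((by fun_prop : Continuous _).intervalIntegrable _ _)
    ((by fun_prop : Continuous _).intervalIntegrable _ _), integral_sin_pow_even,
    integral_sin_pow_even, prod_range_succ, ← wallisProd]
  field_simp
  ring

lemma rpow_three_halves {x : ℝ} (hx : 0 ≤ x) : x ^ (3 / 2 : ℝ) = x * √x := by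
  rw [show (3 / 2 : ℝ) = 1 + 1 / 2 by norm_num, rpow_add' hx (by norm_num), rpow_one,
    sqrt_eq_rpow]

lemma tendsto_sinSqCosPowIntegral_pi_div_two_mul_rpow :
    Tendsto (fun n : ℕ => sinSqCosPowIntegral (π / 2) n * (n : ℝ) ^ (3 / 2 : ℝ)) atTop
      (𝓝 (√π / 2)) := by
  have hlim := (tendsto_wallisProd_mul_sqrt.const_mul (π / 2)).mul
    (tendsto_natCast_div_add_atTop (1 : ℝ))
  rw [show π / 2 * (√π)⁻¹ * 1 = √π / 2 by
    have := sqrt_pos.mpr pi_pos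
    field_simp
    rw [sq_sqrt pi_pos.le]] at hlim
  refine hlim.congr fun n => ?_
  rw [sinSqCosPowIntegral_pi_div_two, rpow_three_halves n.cast_nonneg]
  field_simp

lemma sinSqCosPowIntegral_sub_pi_div_two (δ : ℝ) (n : ℕ) :
    sinSqCosPowIntegral δ n - sinSqCosPowIntegral (π / 2) n =
      2 * ∫ u in (π / 2)..δ, sin u ^ 2 * cos u ^ (2 * n) := by
  set h : ℝ → ℝ := fun u => sin u ^ 2 * cos u ^ (2 * n)
  have hint : ∀ p q : ℝ, IntervalIntegrable h MeasureTheory.volume p q :=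
    fun p q => (by fun_prop : Continuous h).intervalIntegrable p q
  have hsymm : ∫ u in (-δ)..(-(π / 2)), h u = ∫ u in (π / 2)..δ, h u := by
    rw [← integral_comp_neg]
    simp only [h, sin_neg, cos_neg, neg_sq]
  rw [sinSqCosPowIntegral, sinSqCosPowIntegral,
    ← integral_add_adjacent_intervals (hint _ (-(π / 2))) (hint _ _),
    ← integral_add_adjacent_intervals (hint (-(π / 2)) (π / 2)) (hint _ δ), hsymm]
  ring

lemma cos_sq_le_cos_sq_of_mem_uIcc {δ x : ℝ} (hδ0 : 0 < δ) (hδπ : δ < π)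
    (hx : x ∈ Set.uIcc (π / 2) δ) : cos x ^ 2 ≤ cos δ ^ 2 := by
  rcases le_total δ (π / 2) with hδ | hδ
  · obtain ⟨hδx, hxπ⟩ := (Set.uIcc_of_ge hδ ▸ hx : x ∈ Set.Icc δ (π / 2))
    have hcos := cos_le_cos_of_nonneg_of_le_pi hδ0.le (by linarith [pi_pos]) hδx
    have := cos_nonneg_of_mem_Icc ⟨by linarith [pi_pos], hxπ⟩
    nlinarith
  · obtain ⟨hπx, hxδ⟩ := (Set.uIcc_of_le hδ ▸ hx : x ∈ Set.Icc (π / 2) δ)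
    have hcos := cos_le_cos_of_nonneg_of_le_pi (by linarith [pi_pos]) hδπ.le hxδ
    have := cos_nonpos_of_pi_div_two_le_of_le hπx (by linarith [pi_pos])
    nlinarith

lemma abs_sinSqCosPowIntegral_sub_le {δ : ℝ} (hδ0 : 0 < δ) (hδπ : δ < π) (n : ℕ) :
    |sinSqCosPowIntegral δ n - sinSqCosPowIntegral (π / 2) n| ≤ 2 * π * (cos δ ^ 2) ^ n := by
  have hbound : ‖∫ u in (π / 2)..δ, sin u ^ 2 * cos u ^ (2 * n)‖ ≤
      (cos δ ^ 2) ^ n * |δ - π / 2| := by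
    refine norm_integral_le_of_norm_le_const fun x hx => ?_
    rw [pow_mul, norm_of_nonneg (by positivity)]
    have := cos_sq_le_cos_sq_of_mem_uIcc hδ0 hδπ (Set.uIoc_subset_uIcc hx)
    calc sin x ^ 2 * (cos x ^ 2) ^ n ≤ 1 * (cos δ ^ 2) ^ n := by gcongr; exact sin_sq_le_one x
      _ = (cos δ ^ 2) ^ n := one_mul _
  have hlen : |δ - π / 2| ≤ π := abs_le.mpr ⟨by linarith [pi_pos], by linarith [pi_pos]⟩
  rw [sinSqCosPowIntegral_sub_pi_div_two, abs_mul, abs_two, ← norm_eq_abs]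
  calc 2 * ‖_‖ ≤ 2 * ((cos δ ^ 2) ^ n * π) := by gcongr; exact hbound.trans (by gcongr)
    _ = 2 * π * (cos δ ^ 2) ^ n := by ring

lemma tendsto_sinSqCosPowIntegral_mul_rpow {δ : ℝ} (hδ0 : 0 < δ) (hδπ : δ < π) :
    Tendsto (fun n : ℕ => sinSqCosPowIntegral δ n * (n : ℝ) ^ (3 / 2 : ℝ)) atTop
      (𝓝 (√π / 2)) := by
  have hq : cos δ ^ 2 < 1 := by
    rw [cos_sq']
    linarith [pow_pos (sin_pos_of_pos_of_lt_pi hδ0 hδπ) 2]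
  have hgeom := (tendsto_pow_const_mul_const_pow_of_lt_one 2 (sq_nonneg (cos δ)) hq).const_mul
    (2 * π)
  rw [mul_zero] at hgeom
  have htail : Tendsto (fun n : ℕ => (sinSqCosPowIntegral δ n - sinSqCosPowIntegral (π / 2) n) *
      (n : ℝ) ^ (3 / 2 : ℝ)) atTop (𝓝 0) := by
    refine squeeze_zero_norm' ?_ hgeom
    filter_upwards [eventually_ge_atTop 1] with n hn
    have hn1 : (1 : ℝ) ≤ n := by exact_mod_cast hn
    have hrpow : (n : ℝ) ^ (3 / 2 : ℝ) ≤ (n : ℝ) ^ 2 := by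
      rw [← rpow_two]; exact rpow_le_rpow_of_exponent_le hn1 (by norm_num)
    rw [norm_mul, norm_of_nonneg (rpow_nonneg n.cast_nonneg (3 / 2 : ℝ)), norm_eq_abs]
    calc _ ≤ 2 * π * (cos δ ^ 2) ^ n * (n : ℝ) ^ 2 :=
          mul_le_mul (abs_sinSqCosPowIntegral_sub_le hδ0 hδπ n) hrpow (by positivity)
            (by positivity)
      _ = _ := by ring
  have hsum := tendsto_sinSqCosPowIntegral_pi_div_two_mul_rpow.add htail
  rw [add_zero] at hsum
  exact hsum.congr fun n => by ring

lemma integral_eq_sinSqCosPowIntegral {a : ℝ} (ha : 0 < a) (ε : ℝ) (n : ℕ) :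
    ∫ θ in (-ε)..ε, (2 - 2 * cos (2 * √a * θ)) / (4 * a) * ((1 + cos (2 * √a * θ)) / 2) ^ n =
      (a * √a)⁻¹ * sinSqCosPowIntegral (√a * ε) n := by
  have hpt : ∀ θ, (2 - 2 * cos (2 * √a * θ)) / (4 * a) * ((1 + cos (2 * √a * θ)) / 2) ^ n =
      a⁻¹ * (sin (√a * θ) ^ 2 * cos (√a * θ) ^ (2 * n)) := fun θ => by
    rw [mul_assoc 2, pow_mul, sin_sq_eq_half_sub, cos_sq]
    field_simp
    ring
  simp_rw [hpt]
  rw [integral_const_mul, integral_comp_mul_left (fun u => sin u ^ 2 * cos u ^ (2 * n))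
    (sqrt_ne_zero'.mpr ha), smul_eq_mul, mul_neg, sinSqCosPowIntegral, mul_inv]
  ring

/-- For `a > 0`, `f_a(θ) = (2 - 2cos(2√a θ))/(4a)`, `g_a(θ) = (1 + cos(2√a θ))/2`,
and `0 < ε < π/√a`, the sequence `r_n = ∫_{-ε}^{ε} f_a g_a^n` satisfies
`r_n n^{3/2} → √π/(2 a^{3/2})`. -/
theorem example_asymptotics (a : ℝ) (ha : 0 < a) (ε : ℝ)
    (hε : 0 < ε) (hε' : ε < π / Real.sqrt a)
    (r : ℕ → ℝ)
    (hr : ∀ n : ℕ, r n = ∫ θ in (-ε)..ε,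
      ((2 - 2 * Real.cos (2 * Real.sqrt a * θ)) / (4 * a)) *
        ((1 + Real.cos (2 * Real.sqrt a * θ)) / 2) ^ n) :
    Tendsto (fun n : ℕ => r n * (n : ℝ) ^ ((3 : ℝ) / 2)) atTop
      (nhds (Real.sqrt π / (2 * a ^ ((3 : ℝ) / 2)))) := by
  have hsa : 0 < √a := sqrt_pos.mpr ha
  have hδπ : √a * ε < π := (lt_div_iff₀' hsa).mp hε'
  have hlim :=
    (tendsto_sinSqCosPowIntegral_mul_rpow (by positivity) hδπ).const_mul (a * √a)⁻¹
  rw [← rpow_three_halves ha.le, inv_mul_eq_div, div_div] at hlim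
  refine hlim.congr fun n => ?_
  rw [hr n, integral_eq_sinSqCosPowIntegral ha, rpow_three_halves ha.le, mul_assoc]
end

section
/- Let U(x,y) = (-cx + (c-1)y + 1, -(c+1)x + cy + 1) and T_c(x,y) = (cx + (c-1)y + 1, (c+1)x + cy + 1). Then U ∘ T_c ∘ U⁻¹ = T_c⁻¹, and U(T_c^k(0,0)) = T_c^{1-k}(0,0) for all integers k; consequently the segment from P_{1-k} to P_k has slope 1 for all k (i.e., if P_j = T_c^j(0,0) then (second coordinate of P_k − second coordinate of P_{1-k}) equals (first coordinate of P_k − first coordinate of P_{1-k})). -/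
/-- The affine map `T_c(x,y) = (cx + (c-1)y + 1, (c+1)x + cy + 1)` as a bijection of `ℝ²`. -/
def Tmap (c : ℝ) : Equiv.Perm (ℝ × ℝ) where
  toFun p := (c * p.1 + (c - 1) * p.2 + 1, (c + 1) * p.1 + c * p.2 + 1)
  invFun p := (c * (p.1 - 1) - (c - 1) * (p.2 - 1),
               -(c + 1) * (p.1 - 1) + c * (p.2 - 1))
  left_inv p := by
    obtain ⟨x, y⟩ := p
    simp only [Prod.mk.injEq]
    constructor <;> ring
  right_inv p := by
    obtain ⟨x, y⟩ := p
    simp only [Prod.mk.injEq]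
    constructor <;> ring

/-- The affine involution `U(x,y) = (-cx + (c-1)y + 1, -(c+1)x + cy + 1)`. -/
def Umap (c : ℝ) : Equiv.Perm (ℝ × ℝ) where
  toFun p := (-c * p.1 + (c - 1) * p.2 + 1, -(c + 1) * p.1 + c * p.2 + 1)
  invFun p := (-c * p.1 + (c - 1) * p.2 + 1, -(c + 1) * p.1 + c * p.2 + 1)
  left_inv p := by
    obtain ⟨x, y⟩ := p
    simp only [Prod.mk.injEq]
    constructor <;> ring
  right_inv p := by
    obtain ⟨x, y⟩ := p
    simp only [Prod.mk.injEq]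
    constructor <;> ring

/-- `U ∘ T_c ∘ U⁻¹ = T_c⁻¹`, `U(T_c^k(0,0)) = T_c^{1-k}(0,0)` for all integers `k`, and
the segment from `P_{1-k}` to `P_k` has slope one. -/
theorem U_conjugates_T_and_slope_one (c : ℝ) :
    (∀ p : ℝ × ℝ, Umap c (Tmap c ((Umap c)⁻¹ p)) = (Tmap c)⁻¹ p) ∧
    (∀ k : ℤ, Umap c ((Tmap c ^ k) (0, 0)) = (Tmap c ^ (1 - k)) (0, 0)) ∧
    ∀ k : ℤ,
      ((Tmap c ^ k) (0, 0)).2 - ((Tmap c ^ (1 - k)) (0, 0)).2 =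
        ((Tmap c ^ k) (0, 0)).1 - ((Tmap c ^ (1 - k)) (0, 0)).1 := by
  have hconj : Umap c * Tmap c * (Umap c)⁻¹ = (Tmap c)⁻¹ := by
    ext p
    · simp only [Equiv.Perm.mul_apply, Tmap, Umap, Equiv.Perm.inv_def, Equiv.coe_fn_mk,
        Equiv.coe_fn_symm_mk]
      ring
    · simp only [Equiv.Perm.mul_apply, Tmap, Umap, Equiv.Perm.inv_def, Equiv.coe_fn_mk,
        Equiv.coe_fn_symm_mk]
      ring
  have hk : ∀ k : ℤ, Umap c ((Tmap c ^ k) (0, 0)) = (Tmap c ^ (1 - k)) (0, 0) := by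
    intro k
    have h1 : Umap c * Tmap c ^ k * (Umap c)⁻¹ = Tmap c ^ (-k) := by
      rw [← conj_zpow, hconj, inv_zpow, zpow_neg]
    have h2 : Umap c ((Tmap c ^ k) (0, 0)) =
        (Umap c * Tmap c ^ k * (Umap c)⁻¹) (Umap c (0, 0)) := by
      simp [Equiv.Perm.mul_apply]
    rw [h2, h1]
    have hU0 : Umap c ((0 : ℝ), (0 : ℝ)) = Tmap c ((0 : ℝ), (0 : ℝ)) := by
      simp [Umap, Tmap]
    rw [hU0]
    have : (Tmap c ^ (-k)) (Tmap c (0, 0)) = (Tmap c ^ (-k) * Tmap c ^ (1 : ℤ)) (0, 0) := by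
      simp [Equiv.Perm.mul_apply]
    rw [this, ← zpow_add, neg_add_eq_sub]
  refine ⟨?_, hk, ?_⟩
  · intro p
    have := congrFun (congrArg (fun e : Equiv.Perm (ℝ × ℝ) => (e : ℝ × ℝ → ℝ × ℝ)) hconj) p
    simpa [Equiv.Perm.mul_apply] using this
  · intro k
    have h := hk k
    set q := (Tmap c ^ k) ((0 : ℝ), (0 : ℝ)) with hq
    have h1 : ((Tmap c ^ (1 - k)) ((0 : ℝ), (0 : ℝ))).1 = -c * q.1 + (c - 1) * q.2 + 1 := by
      rw [← h]; rfl
    have h2 : ((Tmap c ^ (1 - k)) ((0 : ℝ), (0 : ℝ))).2 = -(c + 1) * q.1 + c * q.2 + 1 := by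
      rw [← h]; rfl
    rw [h1, h2]
    ring
end

section
/- Define the G-sequence recursion q_{i+1} = |q_{i-1} + 2 k_i q_i| with integers k_i ∈ ℤ \ {0} and with initial positive increasing denominators q_1 < q_2. Then the sequence (q_i) is strictly increasing and q_{i+1} - q_i ≥ q_i - q_{i-1} for all i ≥ 2, with equality only if k_i = -1. -/
lemma G_seq_key (a b c : ℤ) (ha : 0 < a) (hab : a < b) (hc : c ≠ 0) :
    2*b - a ≤ |a + 2*c*b| ∧ (|a + 2*c*b| = 2*b - a → c = -1) := by
  have hb : 0 < b := ha.trans hab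
  rcases lt_or_gt_of_ne hc with hneg | hpos
  · have hk1 : c ≤ -1 := by omega
    have h2 : 2*c*b ≤ 2*(-1)*b := by
      have := mul_le_mul_of_nonneg_right (by linarith : 2*c ≤ 2*(-1)) hb.le
      linarith
    have habs : |a + 2*c*b| = -(a + 2*c*b) := abs_of_nonpos (by linarith)
    refine ⟨by rw [habs]; linarith, ?_⟩
    intro h
    rw [habs] at h
    have h3 : (c + 1) * b = 0 := by ring_nf; linarith
    rcases mul_eq_zero.mp h3 with h' | h'
    · linarith
    · exact absurd h' (by positivity)
  · have hk1 : 1 ≤ c := by omega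
    have h2 : 2*1*b ≤ 2*c*b := by
      have := mul_le_mul_of_nonneg_right (by linarith : 2*1 ≤ 2*c) hb.le
      linarith
    have habs : |a + 2*c*b| = a + 2*c*b := abs_of_nonneg (by linarith)
    constructor
    · rw [habs]; linarith
    · intro h; rw [habs] at h; linarith

/-- For the G-sequence recursion `q_{i+1} = |q_{i-1} + 2 k_i q_i|` with nonzero integers
`k_i` and `0 < q 1 < q 2`, the sequence `(q_i)` is strictly increasing and satisfies
`q_{i+1} - q_i ≥ q_i - q_{i-1}` for `i ≥ 2`, with equality only if `k_i = -1`. -/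
theorem G_sequence_denominators_increasing (q : ℕ → ℤ) (k : ℕ → ℤ)
    (hk : ∀ i, k i ≠ 0)
    (h1 : 0 < q 1) (h12 : q 1 < q 2)
    (hrec : ∀ i, 2 ≤ i → q (i + 1) = |q (i - 1) + 2 * k i * q i|) :
    (∀ i, 1 ≤ i → q i < q (i + 1)) ∧
    ∀ i, 2 ≤ i →
      q (i + 1) - q i ≥ q i - q (i - 1) ∧
      (q (i + 1) - q i = q i - q (i - 1) → k i = -1) := by
  have mono : ∀ i, 1 ≤ i → 0 < q i ∧ q i < q (i + 1) := by
    intro i hi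
    induction i, hi using Nat.le_induction with
    | base => exact ⟨h1, h12⟩
    | succ n hn ih =>
      obtain ⟨hpos, hlt⟩ := ih
      have hb : 0 < q (n + 1) := hpos.trans hlt
      have hrec' := hrec (n + 1) (by omega)
      have hidx : (n + 1) - 1 = n := by omega
      rw [hidx] at hrec'
      have hkey := (G_seq_key (q n) (q (n + 1)) (k (n + 1)) hpos hlt (hk (n + 1))).1
      refine ⟨hb, ?_⟩
      rw [hrec']
      linarith
  refine ⟨fun i hi => (mono i hi).2, ?_⟩
  intro i hi
  obtain ⟨j, rfl⟩ : ∃ j, i = j + 2 := ⟨i - 2, by omega⟩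
  have hidx : (j + 2) - 1 = j + 1 := by omega
  rw [hidx]
  obtain ⟨hpos, hlt⟩ := mono (j + 1) (by omega)
  have hrec' := hrec (j + 2) (by omega)
  rw [hidx] at hrec'
  obtain ⟨hineq, heq⟩ := G_seq_key (q (j + 1)) (q (j + 2)) (k (j + 2)) hpos hlt (hk (j + 2))
  rw [hrec']
  exact ⟨by linarith, fun h => heq (by linarith)⟩
end

section
/- In the Klein model of the hyperbolic plane (unit disk with geodesics as Euclidean chords and distance given by log of the cross ratio), the map M_m(x,y) = (x, m y) with 0 < m < 1 maps the disk into itself and strictly decreases the hyperbolic distance between any two distinct points not both lying on the line y = 0. -/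
open Real

/-- The open unit disk, underlying the Klein model of the hyperbolic plane. -/
def kleinDisk : Set (ℝ × ℝ) := {p | p.1 ^ 2 + p.2 ^ 2 < 1}

/-- The hyperbolic cosine of the Klein-model distance between two points of the disk. -/
noncomputable def kleinCosh (p q : ℝ × ℝ) : ℝ :=
  (1 - (p.1 * q.1 + p.2 * q.2)) /
    (Real.sqrt (1 - p.1 ^ 2 - p.2 ^ 2) * Real.sqrt (1 - q.1 ^ 2 - q.2 ^ 2))

/-- The Klein-model hyperbolic distance: this is the logarithm of the cross ratio
`(|P₁P₂|·|Q₁Q₂|)/(|P₁Q₁|·|P₂Q₂|)` of the two points with the endpoints `Q₁, Q₂` of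
their chord on the unit circle; explicitly it equals `arcosh` of `kleinCosh`, i.e.
`log (A + √(A² - 1))` with `A = kleinCosh p q`. -/
noncomputable def kleinDist (p q : ℝ × ℝ) : ℝ :=
  Real.log (kleinCosh p q + Real.sqrt (kleinCosh p q ^ 2 - 1))

set_option maxHeartbeats 1000000 in
/-- The key polynomial inequality behind the strict decrease of the Klein distance. -/
lemma keyPoly (x1 y1 x2 y2 m : ℝ) (hm : 0 < m) (hm' : m < 1)
    (hU : x1^2 + y1^2 < 1) (hV : x2^2 + y2^2 < 1)
    (hne : ¬(x1 = x2 ∧ y1 = y2)) (hy : ¬(y1 = 0 ∧ y2 = 0)) :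
    (1 - (x1*x2 + (m*y1)*(m*y2)))^2 * ((1-x1^2-y1^2)*(1-x2^2-y2^2)) <
    (1 - (x1*x2 + y1*y2))^2 * ((1-x1^2-(m*y1)^2)*(1-x2^2-(m*y2)^2)) := by
  set U : ℝ := 1 - x1^2 - y1^2 with hUdef
  set V : ℝ := 1 - x2^2 - y2^2 with hVdef
  have hU0 : 0 < U := by rw [hUdef]; linarith
  have hV0 : 0 < V := by rw [hVdef]; linarith
  set N : ℝ := 1 - x1*x2 - y1*y2 with hNdef
  set s : ℝ := 1 - m^2 with hsdef
  have hs0 : 0 < s := by rw [hsdef]; nlinarith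
  set d : ℝ := (x1-x2)^2 + (y1-y2)^2 with hddef
  have hNid : N = (U + V + d)/2 := by rw [hNdef, hUdef, hVdef, hddef]; ring
  have hd0 : 0 ≤ d := by rw [hddef]; positivity
  have hN0 : 0 < N := by rw [hNid]; linarith
  have hN2 : U*V ≤ N^2 := by rw [hNid]; nlinarith [sq_nonneg (U - V), sq_nonneg d]
  have hdpos : 0 < d := by
    by_cases hx : x1 = x2
    · have hy' : y1 ≠ y2 := fun hh => hne ⟨hx, hh⟩
      have h1 : y1 - y2 ≠ 0 := sub_ne_zero.mpr hy'
      have : (y1 - y2)^2 > 0 := by positivity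
      rw [hddef]; nlinarith [sq_nonneg (x1 - x2)]
    · have h1 : x1 - x2 ≠ 0 := sub_ne_zero.mpr hx
      have : (x1 - x2)^2 > 0 := by positivity
      rw [hddef]; nlinarith [sq_nonneg (y1 - y2)]
  have hN2' : U*V < N^2 := by rw [hNid]; nlinarith [sq_nonneg (U - V)]
  set E : ℝ := N^2*(U*y2^2 + V*y1^2) - 2*y1*y2*N*U*V + s*y1^2*y2^2*(N^2 - U*V) with hEdef
  have hEpos : 0 < E := by
    rcases lt_trichotomy (y1*y2) 0 with hb | hb | hb
    · have hy1 : y1 ≠ 0 := by rintro rfl; simp at hb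
      have hy2 : y2 ≠ 0 := by rintro rfl; simp at hb
      have h1 : 0 < N^2*(U*y2^2 + V*y1^2) := by positivity
      have h2 : 0 < -(2*y1*y2*N*U*V) := by
        have := mul_pos (mul_pos hU0 hV0) hN0
        nlinarith
      have h3 : 0 ≤ s*y1^2*y2^2*(N^2 - U*V) := by
        have h4 : 0 ≤ N^2 - U*V := by linarith
        positivity
      rw [hEdef]; linarith
    · rcases mul_eq_zero.mp hb with h | h
      · have hy2 : y2 ≠ 0 := fun hh => hy ⟨h, hh⟩
        have hE2 : E = N^2*U*y2^2 := by rw [hEdef, h]; ring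
        rw [hE2]; positivity
      · have hy1 : y1 ≠ 0 := fun hh => hy ⟨hh, h⟩
        have hE2 : E = N^2*V*y1^2 := by rw [hEdef, h]; ring
        rw [hE2]; positivity
    · have hy1 : y1 ≠ 0 := by rintro rfl; simp at hb
      have hy2 : y2 ≠ 0 := by rintro rfl; simp at hb
      have hG : 2*y1*y2*U*V ≤ N*(U*y2^2 + V*y1^2) := by
        have hA1 : 0 ≤ N*(U*y2^2 + V*y1^2) := by positivity
        have hB1 : 0 ≤ 2*y1*y2*U*V := by nlinarith [mul_pos (mul_pos hb hU0) hV0]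
        have hsq : (2*y1*y2*U*V)^2 ≤ (N*(U*y2^2 + V*y1^2))^2 := by
          nlinarith [mul_nonneg (mul_nonneg hU0.le hV0.le) (sq_nonneg (U*y2^2 - V*y1^2)),
            mul_nonneg (mul_nonneg (sq_nonneg (y1*y2)) hU0.le) hV0.le]
        exact le_of_pow_le_pow_left₀ (by norm_num) hA1 hsq
      have hF : 0 ≤ N^2*(U*y2^2 + V*y1^2) - 2*y1*y2*N*U*V := by nlinarith
      have h3 : 0 < s*y1^2*y2^2*(N^2 - U*V) := by
        have h4 : 0 < y1^2*y2^2 := by positivity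
        have h5 : 0 < N^2 - U*V := by linarith
        calc (0:ℝ) < (s*(y1^2*y2^2))*(N^2 - U*V) := mul_pos (mul_pos hs0 h4) h5
        _ = s*y1^2*y2^2*(N^2 - U*V) := by ring
      rw [hEdef]; linarith
  have hid : (1 - (x1*x2 + y1*y2))^2 * ((1-x1^2-(m*y1)^2)*(1-x2^2-(m*y2)^2)) -
      (1 - (x1*x2 + (m*y1)*(m*y2)))^2 * (U*V) = s * E := by
    rw [hEdef, hNdef, hUdef, hVdef, hsdef]; ring
  have := mul_pos hs0 hEpos
  linarith

/-- The Klein cosh of two points of the disk is at least 1. -/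
lemma one_le_aux (x1 y1 x2 y2 : ℝ) (hU : x1^2 + y1^2 < 1) (hV : x2^2 + y2^2 < 1) :
    1 ≤ (1 - (x1*x2 + y1*y2)) /
      (Real.sqrt (1 - x1^2 - y1^2) * Real.sqrt (1 - x2^2 - y2^2)) := by
  have hU0 : (0:ℝ) < 1 - x1^2 - y1^2 := by linarith
  have hV0 : (0:ℝ) < 1 - x2^2 - y2^2 := by linarith
  have hsu : 0 < Real.sqrt (1 - x1^2 - y1^2) := Real.sqrt_pos.mpr hU0
  have hsv : 0 < Real.sqrt (1 - x2^2 - y2^2) := Real.sqrt_pos.mpr hV0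
  rw [le_div_iff₀ (mul_pos hsu hsv), one_mul]
  nlinarith [sq_nonneg (Real.sqrt (1 - x1^2 - y1^2) - Real.sqrt (1 - x2^2 - y2^2)),
    Real.sq_sqrt hU0.le, Real.sq_sqrt hV0.le, sq_nonneg (x1 - x2), sq_nonneg (y1 - y2)]

/-- `arcosh` is strictly increasing. -/
lemma mono_aux (A B : ℝ) (h1 : 1 ≤ A) (h2 : A < B) :
    Real.log (A + Real.sqrt (A^2 - 1)) < Real.log (B + Real.sqrt (B^2 - 1)) := by
  have h0 : 0 < A + Real.sqrt (A^2 - 1) := by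
    have := Real.sqrt_nonneg (A^2 - 1); linarith
  apply Real.log_lt_log h0
  have hs : Real.sqrt (A^2 - 1) ≤ Real.sqrt (B^2 - 1) := by
    apply Real.sqrt_le_sqrt; nlinarith
  linarith

set_option maxHeartbeats 1000000 in
/-- Strict decrease of the Klein cosh under vertical compression. -/
lemma cosh_lt_aux (x1 y1 x2 y2 m : ℝ) (hm : 0 < m) (hm' : m < 1)
    (hU : x1^2 + y1^2 < 1) (hV : x2^2 + y2^2 < 1)
    (hne : ¬(x1 = x2 ∧ y1 = y2)) (hy : ¬(y1 = 0 ∧ y2 = 0)) :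
    (1 - (x1*x2 + (m*y1)*(m*y2))) /
      (Real.sqrt (1 - x1^2 - (m*y1)^2) * Real.sqrt (1 - x2^2 - (m*y2)^2)) <
    (1 - (x1*x2 + y1*y2)) /
      (Real.sqrt (1 - x1^2 - y1^2) * Real.sqrt (1 - x2^2 - y2^2)) := by
  have hkey := keyPoly x1 y1 x2 y2 m hm hm' hU hV hne hy
  have hs1 : (0:ℝ) ≤ (1 - m^2) * y1^2 := by
    apply mul_nonneg _ (sq_nonneg y1); nlinarith
  have hs2 : (0:ℝ) ≤ (1 - m^2) * y2^2 := by
    apply mul_nonneg _ (sq_nonneg y2); nlinarith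
  have hu0 : (0:ℝ) < 1 - x1^2 - (m*y1)^2 := by nlinarith [hs1]
  have hv0 : (0:ℝ) < 1 - x2^2 - (m*y2)^2 := by nlinarith [hs2]
  have hU0 : (0:ℝ) < 1 - x1^2 - y1^2 := by linarith
  have hV0 : (0:ℝ) < 1 - x2^2 - y2^2 := by linarith
  have hAm : 1 ≤ (1 - (x1*x2 + (m*y1)*(m*y2))) /
      (Real.sqrt (1 - x1^2 - (m*y1)^2) * Real.sqrt (1 - x2^2 - (m*y2)^2)) := by
    exact one_le_aux x1 (m*y1) x2 (m*y2) (by nlinarith [hs1]) (by nlinarith [hs2])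
  have hA : 1 ≤ (1 - (x1*x2 + y1*y2)) /
      (Real.sqrt (1 - x1^2 - y1^2) * Real.sqrt (1 - x2^2 - y2^2)) :=
    one_le_aux x1 y1 x2 y2 hU hV
  have hsq : ((1 - (x1*x2 + (m*y1)*(m*y2))) /
      (Real.sqrt (1 - x1^2 - (m*y1)^2) * Real.sqrt (1 - x2^2 - (m*y2)^2)))^2 <
      ((1 - (x1*x2 + y1*y2)) /
      (Real.sqrt (1 - x1^2 - y1^2) * Real.sqrt (1 - x2^2 - y2^2)))^2 := by
    have hh1 : (Real.sqrt (1 - x1^2 - (m*y1)^2) * Real.sqrt (1 - x2^2 - (m*y2)^2))^2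
        = (1 - x1^2 - (m*y1)^2) * (1 - x2^2 - (m*y2)^2) := by
      rw [mul_pow, Real.sq_sqrt hu0.le, Real.sq_sqrt hv0.le]
    have hh2 : (Real.sqrt (1 - x1^2 - y1^2) * Real.sqrt (1 - x2^2 - y2^2))^2
        = (1 - x1^2 - y1^2) * (1 - x2^2 - y2^2) := by
      rw [mul_pow, Real.sq_sqrt hU0.le, Real.sq_sqrt hV0.le]
    rw [div_pow, div_pow, hh1, hh2,
      div_lt_div_iff₀ (mul_pos hu0 hv0) (mul_pos hU0 hV0)]
    nlinarith [hkey]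
  exact lt_of_pow_lt_pow_left₀ 2 (le_trans zero_le_one hA) hsq

/-- In the Klein model, the vertical compression `M_m(x,y) = (x, my)` with `0 < m < 1`
maps the disk into itself and strictly decreases the hyperbolic distance between any two
distinct points not both lying on the line `y = 0`. -/
theorem klein_compression_strictly_decreases_distance
    (m : ℝ) (hm : 0 < m) (hm' : m < 1) :
    (∀ p ∈ kleinDisk, ((p.1, m * p.2) : ℝ × ℝ) ∈ kleinDisk) ∧
    ∀ p ∈ kleinDisk, ∀ q ∈ kleinDisk, p ≠ q → ¬(p.2 = 0 ∧ q.2 = 0) →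
      kleinDist (p.1, m * p.2) (q.1, m * q.2) < kleinDist p q := by
  constructor
  · intro p hp
    simp only [kleinDisk, Set.mem_setOf_eq] at hp ⊢
    have hs1 : (0:ℝ) ≤ (1 - m^2) * p.2^2 := by
      apply mul_nonneg _ (sq_nonneg p.2); nlinarith
    nlinarith [hs1]
  · intro p hp q hq hpq hy
    simp only [kleinDisk, Set.mem_setOf_eq] at hp hq
    have hne : ¬(p.1 = q.1 ∧ p.2 = q.2) := by
      intro ⟨h1, h2⟩; exact hpq (Prod.ext h1 h2)
    have hlt := cosh_lt_aux p.1 p.2 q.1 q.2 m hm hm' hp hq hne hy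
    have hge : 1 ≤ kleinCosh (p.1, m * p.2) (q.1, m * q.2) := by
      have hs1 : (0:ℝ) ≤ (1 - m^2) * p.2^2 := by
        apply mul_nonneg _ (sq_nonneg p.2); nlinarith
      have hs2 : (0:ℝ) ≤ (1 - m^2) * q.2^2 := by
        apply mul_nonneg _ (sq_nonneg q.2); nlinarith
      exact one_le_aux p.1 (m*p.2) q.1 (m*q.2) (by nlinarith [hs1]) (by nlinarith [hs2])
    have hco : kleinCosh (p.1, m * p.2) (q.1, m * q.2) < kleinCosh p q := hlt
    exact mono_aux _ _ hge hco
end
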